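/- arXiv:2507.02127 — 3 statements merged into one kernel-verified Lean document; each statement's English description precedes it below -/
import Mathlib

section
/- Let ω be a primitive cube root of unity in ℂ and f, g polynomials in two variables. Define σ(x,y) = x·y²·f(x³,y³) + x²·y·g(x³,y³). Then σ(x,y)σ(ωx,y) + σ(x,y)σ(ω²x,y) + σ(ωx,y)σ(ω²x,y) = -3·x³·y³·f(x³,y³)·g(x³,y³). In particular, with s = x³, t = y³, the second symmetric function equals -3·s·t·f(s,t)·g(s,t). -/
open MvPolynomial

theorem stmt3 (ω : ℂ) (hω3 : ω ^ 3 = 1) (hω1 : ω ≠ 1)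
    (f g : MvPolynomial (Fin 2) ℂ) (σ : ℂ → ℂ → ℂ)
    (hσ : ∀ x y, σ x y = x * y ^ 2 * eval ![x ^ 3, y ^ 3] f
      + x ^ 2 * y * eval ![x ^ 3, y ^ 3] g) :
    ∀ x y : ℂ,
      σ x y * σ (ω * x) y + σ x y * σ (ω ^ 2 * x) y + σ (ω * x) y * σ (ω ^ 2 * x) y
        = -3 * x ^ 3 * y ^ 3 * eval ![x ^ 3, y ^ 3] f * eval ![x ^ 3, y ^ 3] g := by
  intro x y
  have h : ω ^ 2 + ω + 1 = 0 := by
    have : (ω - 1) * (ω ^ 2 + ω + 1) = 0 := by ring_nf; linear_combination hω3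
    rcases mul_eq_zero.1 this with h | h
    · exact absurd (sub_eq_zero.1 h) hω1
    · exact h
  have e1 : (ω * x) ^ 3 = x ^ 3 := by rw [mul_pow, hω3, one_mul]
  have e2 : (ω ^ 2 * x) ^ 3 = x ^ 3 := by
    rw [mul_pow, ← pow_mul]
    norm_num
    rw [show (6:ℕ) = 3 * 2 by rfl, pow_mul, hω3, one_pow, one_mul]
  rw [hσ, hσ, hσ, e1, e2]
  linear_combination (x ^ 2 * y ^ 4 * (eval ![x ^ 3, y ^ 3] f) ^ 2
      + 3 * x ^ 3 * y ^ 3 * eval ![x ^ 3, y ^ 3] f * eval ![x ^ 3, y ^ 3] g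
      + x ^ 4 * y ^ 2 * (eval ![x ^ 3, y ^ 3] g) ^ 2) * h
    + (x ^ 2 * y ^ 4 * (eval ![x ^ 3, y ^ 3] f) ^ 2
      + (2 * ω + ω ^ 2) * x ^ 3 * y ^ 3 * eval ![x ^ 3, y ^ 3] f * eval ![x ^ 3, y ^ 3] g
      + (ω + ω ^ 3 + 1) * x ^ 4 * y ^ 2 * (eval ![x ^ 3, y ^ 3] g) ^ 2) * hω3
end

section
/- Let ω be a primitive cube root of unity in ℂ and f, g polynomials in two variables. Define σ(x,y) = x·y²·f(x³,y³) + x²·y·g(x³,y³). Then σ(x,y)·σ(ωx,y)·σ(ω²x,y) = x³·y⁶·f(x³,y³)³ + x⁶·y³·g(x³,y³)³, i.e., with s = x³, t = y³, the product of the three fiber values equals s·t²·f(s,t)³ + s²·t·g(s,t)³. -/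
open MvPolynomial

theorem stmt4 (ω : ℂ) (hω3 : ω ^ 3 = 1) (hω1 : ω ≠ 1)
    (f g : MvPolynomial (Fin 2) ℂ) (σ : ℂ → ℂ → ℂ)
    (hσ : ∀ x y, σ x y = x * y ^ 2 * eval ![x ^ 3, y ^ 3] f
      + x ^ 2 * y * eval ![x ^ 3, y ^ 3] g) :
    ∀ x y : ℂ,
      σ x y * σ (ω * x) y * σ (ω ^ 2 * x) y
        = x ^ 3 * y ^ 6 * (eval ![x ^ 3, y ^ 3] f) ^ 3
          + x ^ 6 * y ^ 3 * (eval ![x ^ 3, y ^ 3] g) ^ 3 := by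
  have hsum : ω ^ 2 + ω + 1 = 0 := by
    have h : (ω - 1) * (ω ^ 2 + ω + 1) = 0 := by ring_nf; linear_combination hω3
    rcases mul_eq_zero.mp h with h1 | h2
    · exact absurd (sub_eq_zero.mp h1) hω1
    · exact h2
  intro x y
  have h1 : (ω * x) ^ 3 = x ^ 3 := by rw [mul_pow, hω3, one_mul]
  have h2 : (ω ^ 2 * x) ^ 3 = x ^ 3 := by
    rw [mul_pow, ← pow_mul]
    norm_num
    rw [show (6:ℕ) = 3 * 2 by norm_num, pow_mul, hω3, one_pow, one_mul]
  rw [hσ, hσ, hσ, h1, h2]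
  set A := x * y ^ 2 * eval ![x ^ 3, y ^ 3] f with hA
  set B := x ^ 2 * y * eval ![x ^ 3, y ^ 3] g with hB
  have key : (A + B) * (ω * A + ω ^ 2 * B) * (ω ^ 2 * A + ω ^ 4 * B) = A ^ 3 + B ^ 3 := by
    linear_combination (A ^ 3 + (ω ^ 3 + 1) * B ^ 3) * hω3
      + (ω ^ 3 * A ^ 2 * B + ω ^ 4 * A * B ^ 2) * hsum
  calc (A + B) * (ω * x * y ^ 2 * eval ![x ^ 3, y ^ 3] f + (ω * x) ^ 2 * y * eval ![x ^ 3, y ^ 3] g)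
        * (ω ^ 2 * x * y ^ 2 * eval ![x ^ 3, y ^ 3] f + (ω ^ 2 * x) ^ 2 * y * eval ![x ^ 3, y ^ 3] g)
      = (A + B) * (ω * A + ω ^ 2 * B) * (ω ^ 2 * A + ω ^ 4 * B) := by rw [hA, hB]; ring
    _ = A ^ 3 + B ^ 3 := key
    _ = x ^ 3 * y ^ 6 * (eval ![x ^ 3, y ^ 3] f) ^ 3
          + x ^ 6 * y ^ 3 * (eval ![x ^ 3, y ^ 3] g) ^ 3 := by rw [hA, hB]; ring
end

section
/- Let A ⊆ B be commutative rings with B an integral domain, J a nonzero ideal of B contained in A, and M a torsion-free A-module that is also a B-module extending the A-structure. Then the natural map M → (B ⊗_A M)/Tors, x ↦ [1 ⊗ x], is an isomorphism of B-modules; concretely, for every b ∈ B and x ∈ M, the element b ⊗ x - 1 ⊗ (b·x) of B ⊗_A M is torsion (annihilated by every nonzero m ∈ J). -/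
open TensorProduct

theorem stmt10 {A B : Type*} [CommRing A] [CommRing B] [IsDomain B] [Algebra A B]
    (J : Ideal B) (hJ : J ≠ ⊥) (hJA : ∀ j ∈ J, j ∈ (algebraMap A B).range)
    (M : Type*) [AddCommGroup M] [Module A M] [Module B M] [IsScalarTower A B M]
    [NoZeroSMulDivisors B M] :
    (∀ (b : B) (x : M), ∀ m ∈ J, m • (b ⊗ₜ[A] x - 1 ⊗ₜ[A] (b • x)) = 0) ∧
    Function.Bijective (fun x : M =>
      Submodule.Quotient.mk (p := Submodule.torsion B (B ⊗[A] M)) (1 ⊗ₜ[A] x)) := by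
  have key1 : ∀ (b : B) (x : M), ∀ m ∈ J, m • (b ⊗ₜ[A] x - 1 ⊗ₜ[A] (b • x)) = 0 := by
    intro b x m hm
    obtain ⟨a, ha⟩ := hJA (m * b) (J.mul_mem_right b hm)
    obtain ⟨a', ha'⟩ := hJA m hm
    rw [smul_sub, smul_tmul', smul_tmul', smul_eq_mul, smul_eq_mul, mul_one, ← ha, ← ha']
    have h1 : (algebraMap A B a) ⊗ₜ[A] x = (1 : B) ⊗ₜ[A] (a • x) := by
      rw [Algebra.algebraMap_eq_smul_one, smul_tmul]
    have h2 : (algebraMap A B a') ⊗ₜ[A] (b • x) = (1 : B) ⊗ₜ[A] (a' • b • x) := by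
      rw [Algebra.algebraMap_eq_smul_one, smul_tmul]
    rw [h1, h2, sub_eq_zero]
    congr 1
    rw [← IsScalarTower.algebraMap_smul B a x, ← IsScalarTower.algebraMap_smul B a' (b • x),
      ha, ha', smul_smul]
  refine ⟨key1, ?_⟩
  -- the action map
  set μ : B ⊗[A] M →ₗ[B] M := LinearMap.liftBaseChange B (LinearMap.id : M →ₗ[A] M) with hμ
  have hμt : ∀ (b : B) (x : M), μ (b ⊗ₜ[A] x) = b • x := fun b x => by
    simp [hμ]
  obtain ⟨m, hmJ, hm0⟩ := Submodule.ne_bot_iff J |>.mp hJ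
  have key2 : ∀ t : B ⊗[A] M, m • (t - 1 ⊗ₜ[A] (μ t)) = 0 := by
    intro t
    induction t using TensorProduct.induction_on with
    | zero => simp
    | tmul b x => rw [hμt]; exact key1 b x m hmJ
    | add t1 t2 h1 h2 =>
      rw [map_add, tmul_add]
      have : t1 + t2 - (1 ⊗ₜ[A] (μ t1) + 1 ⊗ₜ[A] (μ t2))
          = (t1 - 1 ⊗ₜ[A] (μ t1)) + (t2 - 1 ⊗ₜ[A] (μ t2)) := by abel
      rw [this, smul_add, h1, h2, add_zero]
  constructor
  · intro x y h
    rw [Submodule.Quotient.eq] at h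
    obtain ⟨c, hc⟩ := h
    rw [Submonoid.smul_def] at hc
    have := congrArg μ hc
    rw [map_smul, map_sub, hμt, hμt, one_smul, one_smul, map_zero] at this
    have hc0 : (c : B) ≠ 0 := nonZeroDivisors.ne_zero c.2
    have := (smul_eq_zero.mp this).resolve_left hc0
    exact sub_eq_zero.mp this
  · intro q
    obtain ⟨t, rfl⟩ := Submodule.Quotient.mk_surjective _ q
    refine ⟨μ t, ?_⟩
    rw [Submodule.Quotient.eq]
    refine ⟨⟨m, mem_nonZeroDivisors_of_ne_zero hm0⟩, ?_⟩
    show m • (1 ⊗ₜ[A] μ t - t) = 0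
    rw [← neg_sub, smul_neg, key2 t, neg_zero]
end
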